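/- Let 𝒜 be a commutative unital complex semisimple Banach algebra, A ∈ 𝒜^{n×n}, B ∈ 𝒜^{m×m}. The following are equivalent: (1) for every C ∈ 𝒜^{n×m} the matrices [[A,0],[0,B]] and [[A,C],[0,B]] are similar over 𝒜; (2) for every C ∈ 𝒜^{n×m} there is a unique X ∈ 𝒜^{n×m} with AX − XB = C; (3) for all φ ∈ M_𝒜, σ(Â(φ)) ∩ σ(B̂(φ)) = ∅. -/

import Mathlib

/-!
Vectorising `X ↦ A * X - X * B` turns it into the Kronecker matrix `1 ⊗ₖ A - Bᵀ ⊗ₖ 1`, so unique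
solvability of the Sylvester equation means that the determinant of this matrix is a unit of `𝒜`.
By Gelfand theory that holds iff no character kills it, and a character `φ` carries it to the
determinant for `Â(φ)`, `B̂(φ)`, which is nonzero iff their spectra are disjoint (Cayley–Hamilton
in one direction, a rank-one solution `v wᵀ` built from eigenvectors in the other).
A solution `X` of `A * X - X * B = -C` conjugates the block matrices by `[[1, X], [0, 1]]`.
Conversely, if `Â(φ)` and `B̂(φ)` share an eigenvalue `μ`, with a left eigenvector `u` of `Â(φ)`
and a right eigenvector `v` of `B̂(φ)`, take the scalar `C = x ℓᵀ` with `uᵀx ≠ 0 ≠ ℓᵀv`: then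
`[[Â(φ), C], [0, B̂(φ)]] - μ` has a strictly smaller kernel than `[[Â(φ), 0], [0, B̂(φ)]] - μ`,
so the two are not similar over `ℂ`, let alone over `𝒜`.
-/

open WeakDual Matrix Polynomial
open scoped Kronecker

namespace Matrix

variable {m n : Type*} [Fintype m] [Fintype n] [DecidableEq m] [DecidableEq n]

section CommRing

variable {R : Type*} [CommRing R]

/-- The matrix of `X ↦ A * X - X * B` in the coordinates `vec X` (not the resultant's
`Polynomial.sylvester`). -/
def sylvesterMatrix (A : Matrix m m R) (B : Matrix n n R) : Matrix (n × m) (n × m) R :=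
  1 ⊗ₖ A - Bᵀ ⊗ₖ 1

omit [Fintype m] [Fintype n] in
theorem sylvesterMatrix_map {S F : Type*} [CommRing S] [FunLike F R S] [RingHomClass F R S]
    (f : F) (A : Matrix m m R) (B : Matrix n n R) :
    (sylvesterMatrix A B).map f = sylvesterMatrix (A.map f) (B.map f) := by
  ext ⟨i, j⟩ ⟨k, l⟩
  simp [sylvesterMatrix, one_apply, apply_ite f]

theorem sylvesterMatrix_mulVec_comp_vec (A : Matrix m m R) (B : Matrix n n R) :
    (sylvesterMatrix A B *ᵥ ·) ∘ vec = vec ∘ fun X : Matrix m n R => A * X - X * B := by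
  ext X : 1
  rw [Function.comp_apply, sylvesterMatrix, sub_mulVec, kronecker_mulVec_vec,
    kronecker_mulVec_vec, transpose_one, transpose_transpose, Matrix.mul_one, Matrix.one_mul,
    Function.comp_apply, vec_sub]

theorem isUnit_sylvesterMatrix_iff_bijective (A : Matrix m m R) (B : Matrix n n R) :
    IsUnit (sylvesterMatrix A B) ↔ Function.Bijective fun X : Matrix m n R => A * X - X * B := by
  rw [← vec_bijective.of_comp_iff', ← sylvesterMatrix_mulVec_comp_vec, vec_bijective.of_comp_iff]
  exact ⟨fun h => ⟨mulVec_injective_of_isUnit h, mulVec_surjective_iff_isUnit.mpr h⟩,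
    fun h => mulVec_surjective_iff_isUnit.mp h.2⟩

theorem aeval_mul_eq_mul_aeval {A : Matrix m m R} {B : Matrix n n R} {X : Matrix m n R}
    (h : A * X = X * B) (p : R[X]) : aeval A p * X = X * aeval B p := by
  induction p using Polynomial.induction_on' with
  | add p q hp hq => simp only [map_add, Matrix.add_mul, Matrix.mul_add, hp, hq]
  | monomial k c =>
    have hpow : A ^ k * X = X * B ^ k := by
      induction k with
      | zero => simp
      | succ k ih =>
        rw [pow_succ, pow_succ, Matrix.mul_assoc, h, ← Matrix.mul_assoc, ih, Matrix.mul_assoc]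
    simp only [aeval_monomial, ← Algebra.smul_def, Matrix.smul_mul, Matrix.mul_smul, hpow]

theorem _root_.IsConj.rank_eq {M N : Matrix m m R} (h : IsConj M N) : M.rank = N.rank := by
  obtain ⟨c, hc⟩ := h
  have hdet : IsUnit (c : Matrix m m R).det := (isUnit_iff_isUnit_det _).mp c.isUnit
  rw [← rank_mul_eq_right_of_isUnit_det _ M hdet, hc.eq, rank_mul_eq_left_of_isUnit_det _ N hdet]

end CommRing

theorem _root_.IsConj.sub_algebraMap {R α : Type*} [CommSemiring R] [Ring α] [Algebra R α]
    {a b : α} (h : IsConj a b) (r : R) :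
    IsConj (a - algebraMap R α r) (b - algebraMap R α r) := by
  obtain ⟨c, hc⟩ := h
  exact ⟨c, hc.sub_right (Algebra.commutes r _).symm⟩

theorem isConj_fromBlocks_of_mul_sub_mul_eq {α : Type*} [Ring α] {A : Matrix m m α}
    {B : Matrix n n α} {C X : Matrix m n α} (h : X * B - A * X = C) :
    IsConj (fromBlocks A 0 0 B) (fromBlocks A C 0 B) := by
  refine ⟨⟨fromBlocks 1 X 0 1, fromBlocks 1 (-X) 0 1, ?_, ?_⟩, ?_⟩
  · simp [fromBlocks_multiply, ← fromBlocks_one]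
  · simp [fromBlocks_multiply, ← fromBlocks_one]
  · simp [SemiconjBy, fromBlocks_multiply, ← h]

section Field

variable {K : Type*} [Field K]

theorem exists_mulVec_eq_zero_of_mem_spectrum {A : Matrix m m K} {μ : K}
    (h : μ ∈ spectrum K A) : ∃ v ≠ 0, (A - algebraMap K _ μ) *ᵥ v = 0 := by
  rw [spectrum.mem_iff, ← IsUnit.neg_iff, neg_sub, isUnit_iff_isUnit_det, isUnit_iff_ne_zero,
    not_not] at h
  exact exists_mulVec_eq_zero_iff.mpr h

theorem exists_vecMul_eq_zero_of_mem_spectrum {A : Matrix m m K} {μ : K}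
    (h : μ ∈ spectrum K A) : ∃ v ≠ 0, v ᵥ* (A - algebraMap K _ μ) = 0 := by
  rw [spectrum.mem_iff, ← IsUnit.neg_iff, neg_sub, isUnit_iff_isUnit_det, isUnit_iff_ne_zero,
    not_not] at h
  exact exists_vecMul_eq_zero_iff.mpr h

theorem exists_ne_zero_mul_eq_mul_of_mem_spectrum {A : Matrix m m K} {B : Matrix n n K} {μ : K}
    (hA : μ ∈ spectrum K A) (hB : μ ∈ spectrum K B) :
    ∃ X : Matrix m n K, X ≠ 0 ∧ A * X = X * B := by
  obtain ⟨v, hv, hAv⟩ := exists_mulVec_eq_zero_of_mem_spectrum hA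
  obtain ⟨w, hw, hwB⟩ := exists_vecMul_eq_zero_of_mem_spectrum hB
  refine ⟨vecMulVec v w, fun h => ?_, ?_⟩
  · obtain ⟨i, hi⟩ := Function.ne_iff.mp hv
    obtain ⟨j, hj⟩ := Function.ne_iff.mp hw
    exact mul_ne_zero hi hj congr($h i j)
  rw [sub_mulVec, sub_eq_zero] at hAv
  rw [vecMul_sub, sub_eq_zero] at hwB
  rw [mul_vecMulVec, vecMulVec_mul, hAv, hwB]
  simp [Algebra.algebraMap_eq_smul_one, smul_mulVec, vecMul_smul, smul_vecMulVec, vecMulVec_smul]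

theorem eq_zero_of_mul_eq_mul_of_disjoint_spectrum [IsAlgClosed K] {A : Matrix m m K}
    {B : Matrix n n K} (hAB : Disjoint (spectrum K A) (spectrum K B)) {X : Matrix m n K}
    (h : A * X = X * B) : X = 0 := by
  have hunit : IsUnit (aeval A B.charpoly) := by
    by_contra hA
    rw [(IsAlgClosed.splits B.charpoly).eq_prod_roots_of_monic (charpoly_monic B)] at hA
    obtain ⟨μ, hμA, hμB⟩ := spectrum.exists_mem_of_not_isUnit_aeval_prod hA
    exact hAB.ne_of_mem hμA (mem_spectrum_iff_isRoot_charpoly.mpr hμB) rfl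
  have hzero : aeval A B.charpoly * X = 0 := by
    rw [aeval_mul_eq_mul_aeval h, aeval_self_charpoly, Matrix.mul_zero]
  simpa [hzero] using (nonsing_inv_mul_cancel_left _ X ((isUnit_iff_isUnit_det _).mp hunit)).symm

theorem isUnit_sylvesterMatrix_iff_injective (A : Matrix m m K) (B : Matrix n n K) :
    IsUnit (sylvesterMatrix A B) ↔ Function.Injective fun X : Matrix m n K => A * X - X * B := by
  rw [← mulVec_injective_iff_isUnit, ← vec_bijective.injective.of_comp_iff,
    ← sylvesterMatrix_mulVec_comp_vec, Function.Injective.of_comp_iff' _ vec_bijective]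

theorem isUnit_sylvesterMatrix_iff_disjoint [IsAlgClosed K] (A : Matrix m m K)
    (B : Matrix n n K) :
    IsUnit (sylvesterMatrix A B) ↔ Disjoint (spectrum K A) (spectrum K B) := by
  rw [isUnit_sylvesterMatrix_iff_injective]
  constructor
  · refine fun hinj => Set.disjoint_left.mpr fun μ hA hB => ?_
    obtain ⟨X, hX, hAXB⟩ := exists_ne_zero_mul_eq_mul_of_mem_spectrum hA hB
    exact hX (hinj (by simp [hAXB]))
  · intro hAB X Y hXY
    rw [← sub_eq_zero]
    refine eq_zero_of_mul_eq_mul_of_disjoint_spectrum hAB ?_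
    rw [Matrix.mul_sub, Matrix.sub_mul]
    exact sub_eq_sub_iff_sub_eq_sub.mp hXY

omit [DecidableEq m] in
theorem rank_lt_rank_add_vecMulVec {M : Matrix m m K} {r x ℓ w : m → K} (hr : r ᵥ* M = 0)
    (hrx : r ⬝ᵥ x ≠ 0) (hw : M *ᵥ w = 0) (hℓw : ℓ ⬝ᵥ w ≠ 0) :
    M.rank < (M + vecMulVec x ℓ).rank := by
  have hmulVec : ∀ y, (M + vecMulVec x ℓ) *ᵥ y = M *ᵥ y + (ℓ ⬝ᵥ y) • x := fun y => by
    rw [add_mulVec, vecMulVec_mulVec, op_smul_eq_smul]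
  have hker : LinearMap.ker (M + vecMulVec x ℓ).mulVecLin < LinearMap.ker M.mulVecLin := by
    refine lt_of_le_of_ne (fun y hy => ?_) (fun heq => ?_)
    · rw [LinearMap.mem_ker, mulVecLin_apply, hmulVec] at hy
      have hℓy : ℓ ⬝ᵥ y = 0 := by
        simpa [dotProduct_add, dotProduct_mulVec, hr, hrx] using congrArg (r ⬝ᵥ ·) hy
      simpa [hℓy] using hy
    · have hx : x ≠ 0 := by rintro rfl; simp at hrx
      have hw' : w ∈ LinearMap.ker (M + vecMulVec x ℓ).mulVecLin :=
        heq ▸ LinearMap.mem_ker.mpr hw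
      rw [LinearMap.mem_ker, mulVecLin_apply, hmulVec, hw, zero_add] at hw'
      exact smul_ne_zero hℓw hx hw'
  have hrank (N : Matrix m m K) :
      N.rank + Module.finrank K (LinearMap.ker N.mulVecLin) = Fintype.card m := by
    rw [rank, LinearMap.finrank_range_add_finrank_ker, Module.finrank_fintype_fun_eq_card]
  have := Submodule.finrank_lt_finrank_of_lt hker
  have := hrank M
  have := hrank (M + vecMulVec x ℓ)
  omega

theorem exists_not_isConj_fromBlocks_of_mem_spectrum {A : Matrix m m K} {B : Matrix n n K}
    {μ : K} (hA : μ ∈ spectrum K A) (hB : μ ∈ spectrum K B) :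
    ∃ C : Matrix m n K, ¬IsConj (fromBlocks A 0 0 B) (fromBlocks A C 0 B) := by
  obtain ⟨u, hu, huA⟩ := exists_vecMul_eq_zero_of_mem_spectrum hA
  obtain ⟨v, hv, hBv⟩ := exists_mulVec_eq_zero_of_mem_spectrum hB
  obtain ⟨x, hx⟩ : ∃ x, u ⬝ᵥ x ≠ 0 := not_forall.mp (mt dotProduct_eq_zero_iff.mp hu)
  obtain ⟨ℓ, hℓ⟩ : ∃ ℓ, ℓ ⬝ᵥ v ≠ 0 := by
    simpa only [dotProduct_comm _ v] using not_forall.mp (mt dotProduct_eq_zero_iff.mp hv)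
  refine ⟨vecMulVec x ℓ, fun hconj => ?_⟩
  set D := fromBlocks (A - algebraMap K _ μ) 0 0 (B - algebraMap K _ μ)
  have h₀ : fromBlocks A 0 0 B - algebraMap K _ μ = D := by
    ext (i | i) (j | j) <;> simp [D, algebraMap_eq_diagonal, diagonal_apply]
  have h₁ : fromBlocks A (vecMulVec x ℓ) 0 B - algebraMap K _ μ =
      D + vecMulVec (Sum.elim x 0) (Sum.elim 0 ℓ) := by
    ext (i | i) (j | j) <;> simp [D, algebraMap_eq_diagonal, diagonal_apply, vecMulVec_apply]
  have hrank := (hconj.sub_algebraMap μ).rank_eq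
  rw [h₀, h₁] at hrank
  refine (rank_lt_rank_add_vecMulVec (r := Sum.elim u 0) (w := Sum.elim 0 v) ?_ ?_ ?_ ?_).ne hrank
  · simp [D, vecMul_fromBlocks, huA]
  · simpa using hx
  · simp [D, fromBlocks_mulVec, hBv]
  · simpa using hℓ

theorem disjoint_spectrum_map_of_forall_isConj {α F : Type*} [Ring α] [Algebra K α]
    [FunLike F α K] [AlgHomClass F K α K] (φ : F) {A : Matrix m m α} {B : Matrix n n α}
    (h : ∀ C, IsConj (fromBlocks A 0 0 B) (fromBlocks A C 0 B)) :
    Disjoint (spectrum K (A.map φ)) (spectrum K (B.map φ)) := by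
  refine Set.disjoint_left.mpr fun μ hA hB => ?_
  obtain ⟨C, hC⟩ := exists_not_isConj_fromBlocks_of_mem_spectrum hA hB
  have hconj := (RingHomClass.toRingHom φ).mapMatrix.toMonoidHom.map_isConj
    (h (C.map (algebraMap K α)))
  exact hC (by simpa [fromBlocks_map, Matrix.map_map, Function.comp_def, AlgHomClass.commutes]
    using hconj)

end Field

end Matrix

theorem WeakDual.CharacterSpace.isUnit_iff_forall_apply_ne_zero {𝒜 : Type*} [NormedCommRing 𝒜]
    [NormedAlgebra ℂ 𝒜] [CompleteSpace 𝒜] {a : 𝒜} :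
    IsUnit a ↔ ∀ φ : characterSpace ℂ 𝒜, φ a ≠ 0 :=
  ⟨fun h φ => (h.map φ).ne_zero, fun h => by_contra fun ha =>
    let ⟨φ, hφ⟩ := exists_apply_eq_zero ha; h φ hφ⟩

theorem existsUnique_mul_sub_mul_eq_iff_disjoint_spectrum_map {𝒜 : Type*} [NormedCommRing 𝒜]
    [NormedAlgebra ℂ 𝒜] [CompleteSpace 𝒜] {m n : Type*} [Fintype m] [Fintype n] [DecidableEq m]
    [DecidableEq n] (A : Matrix m m 𝒜) (B : Matrix n n 𝒜) :
    (∀ C : Matrix m n 𝒜, ∃! X : Matrix m n 𝒜, A * X - X * B = C) ↔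
      ∀ φ : characterSpace ℂ 𝒜, Disjoint (spectrum ℂ (A.map φ)) (spectrum ℂ (B.map φ)) := by
  have hdet (φ : characterSpace ℂ 𝒜) :
      φ (sylvesterMatrix A B).det = (sylvesterMatrix (A.map φ) (B.map φ)).det := by
    rw [← sylvesterMatrix_map]
    exact (RingHomClass.toRingHom φ).map_det _
  simp only [← Function.bijective_iff_existsUnique, ← isUnit_sylvesterMatrix_iff_bijective,
    ← isUnit_sylvesterMatrix_iff_disjoint, isUnit_iff_isUnit_det, isUnit_iff_ne_zero, ← hdet]
  exact CharacterSpace.isUnit_iff_forall_apply_ne_zero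

theorem roth_tfae_banach_algebra_general (n m : ℕ)
    {𝒜 : Type*} [NormedCommRing 𝒜] [NormedAlgebra ℂ 𝒜] [CompleteSpace 𝒜]
    (A : Matrix (Fin n) (Fin n) 𝒜) (B : Matrix (Fin m) (Fin m) 𝒜) :
    List.TFAE
      [∀ C : Matrix (Fin n) (Fin m) 𝒜,
        IsConj (Matrix.fromBlocks A 0 0 B) (Matrix.fromBlocks A C 0 B),
       ∀ C : Matrix (Fin n) (Fin m) 𝒜, ∃! X : Matrix (Fin n) (Fin m) 𝒜, A * X - X * B = C,
       ∀ φ : characterSpace ℂ 𝒜, spectrum ℂ (A.map φ) ∩ spectrum ℂ (B.map φ) = ∅] := by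
  simp only [← Set.disjoint_iff_inter_eq_empty]
  tfae_have 2 → 1 := fun h C => by
    obtain ⟨X, hX, -⟩ := h (-C)
    exact isConj_fromBlocks_of_mul_sub_mul_eq (by rw [← neg_sub, hX, neg_neg])
  tfae_have 1 → 3 := fun h φ => disjoint_spectrum_map_of_forall_isConj φ h
  tfae_have 2 ↔ 3 := existsUnique_mul_sub_mul_eq_iff_disjoint_spectrum_map A B
  tfae_finish

theorem roth_tfae_banach_algebra (n m : ℕ)
    {𝒜 : Type*} [NormedCommRing 𝒜] [NormedAlgebra ℂ 𝒜] [CompleteSpace 𝒜] [Nontrivial 𝒜]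
    (hss : ∀ a : 𝒜, (∀ φ : characterSpace ℂ 𝒜, φ a = 0) → a = 0)
    (A : Matrix (Fin n) (Fin n) 𝒜) (B : Matrix (Fin m) (Fin m) 𝒜) :
    List.TFAE
      [∀ C : Matrix (Fin n) (Fin m) 𝒜,
        IsConj (Matrix.fromBlocks A 0 0 B) (Matrix.fromBlocks A C 0 B),
       ∀ C : Matrix (Fin n) (Fin m) 𝒜, ∃! X : Matrix (Fin n) (Fin m) 𝒜, A * X - X * B = C,
       ∀ φ : characterSpace ℂ 𝒜, spectrum ℂ (A.map φ) ∩ spectrum ℂ (B.map φ) = ∅] :=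
  roth_tfae_banach_algebra_general n m A B
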